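/- arXiv:1405.2942 — 2 statements merged into one kernel-verified Lean document; each statement's English description precedes it below -/
import Mathlib

section
/- For every r > 0 one has ∫_Λ ∫_{E^∞} log μ_λ(B_{π_λ}(ω, r)) dμ_λ(ω) dm(λ) > −∞; more precisely, if X is covered by l balls of radius r/2, then ∫_{E^∞} −log μ_λ(B_{π_λ}(ω, r)) dμ_λ(ω) ≤ l·Σ_{n=0}^∞ (n+1)e^{-n} < ∞ for every λ ∈ Λ. -/
open MeasureTheory Filter Set Metric Function Topology
open scoped ENNReal NNReal

noncomputable section

namespace RIFS

/-- Euclidean space `ℝ^q`. -/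
abbrev Pt (q : ℕ) := EuclideanSpace ℝ (Fin q)

/-- The one-sided shift on `E^∞`. -/
def shift {E : Type*} (ω : ℕ → E) : ℕ → E := fun n => ω (n + 1)

/-- The cylinder `[e] = {ω : ω₁ = e}`. -/
def cyl {E : Type*} (e : E) : Set (ℕ → E) := {ω | ω 0 = e}

/-- `B_H(ω, r) = H⁻¹(B(H(ω), r))`. -/
def BH {E β : Type*} [PseudoMetricSpace β] (H : (ℕ → E) → β) (ω : ℕ → E) (r : ℝ) :
    Set (ℕ → E) := H ⁻¹' Metric.ball (H ω) r

/-- The randomized composition `φ_{ω|_n}^λ = φ_{ω₁}^λ ∘ φ_{ω₂}^{θλ} ∘ ⋯ ∘ φ_{ω_n}^{θ^{n-1}λ}`. -/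
def word {Λ E β : Type*} (θ : Λ → Λ) (φ : E → Λ → β → β) :
    Λ → (ℕ → E) → ℕ → β → β
  | _, _, 0 => id
  | l, ω, n + 1 => φ (ω 0) l ∘ word θ φ (θ l) (shift ω) n

/-- The coding map `π_λ(ω) = ⋂_n φ_{ω|_n}^λ(X)`, realized as the limit of
`φ_{ω|_n}^λ(x₀)` for a base point `x₀ ∈ X`. -/
def proj {Λ E β : Type*} [TopologicalSpace β] [Nonempty β]
    (θ : Λ → Λ) (φ : E → Λ → β → β) (x₀ : β) (l : Λ) (ω : ℕ → E) : β :=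
  limUnder atTop fun n => word θ φ l ω n x₀

section Entropy

variable {Λ E β : Type*} [MeasurableSpace Λ] [MeasurableSpace E] [MeasurableSpace β]

/-- The σ-algebra generated by the partition `π_Λ^{-1}(ε_Λ)`. -/
def algL : MeasurableSpace (Λ × (ℕ → E)) := MeasurableSpace.comap Prod.fst inferInstance

/-- The σ-algebra generated by `π_Λ^{-1}(ε_Λ) ∨ π_{ℝ^q}^{-1}(ε_{ℝ^q})`. -/
def algLpi (π : Λ → (ℕ → E) → β) : MeasurableSpace (Λ × (ℕ → E)) :=
  MeasurableSpace.comap (fun p => (p.1, π p.1 p.2)) inferInstance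

/-- The σ-algebra generated by `π_Λ^{-1}(ε_Λ) ∨ (θ×σ)^{-1}(π_{ℝ^q}^{-1}(ε_{ℝ^q}))`. -/
def algLpiT (θ : Λ → Λ) (π : Λ → (ℕ → E) → β) : MeasurableSpace (Λ × (ℕ → E)) :=
  MeasurableSpace.comap (fun p => (p.1, π (θ p.1) (shift p.2))) inferInstance

/-- The information function of the cylinder partition `π_{E^∞}^{-1}(ξ)` with
respect to a sub-σ-algebra `𝔪`. -/
def condInfoCyl (μ : Measure (Λ × (ℕ → E))) (𝔪 : MeasurableSpace (Λ × (ℕ → E))) :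
    Λ × (ℕ → E) → ℝ := fun p =>
  - Real.log ((μ[Set.indicator (Prod.snd ⁻¹' cyl (p.2 0)) (fun _ => (1 : ℝ)) | 𝔪]) p)

/-- Conditional entropy `H_μ(π_{E^∞}^{-1}(ξ) | 𝔪)`. -/
def condEntCyl (μ : Measure (Λ × (ℕ → E))) (𝔪 : MeasurableSpace (Λ × (ℕ → E))) : ℝ :=
  ∫ p, condInfoCyl μ 𝔪 p ∂μ

/-- The random projectional entropy `h_μ(S)`. -/
def projEnt (θ : Λ → Λ) (π : Λ → (ℕ → E) → β) (μ : Measure (Λ × (ℕ → E))) : ℝ :=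
  condEntCyl μ (algLpiT θ π) - condEntCyl μ (algLpi π)

/-- The Lyapunov exponent `χ_μ = -∫ log |(φ_{ω₁}^λ)'(π_{θλ}(σω))| dμ`. -/
def lyap (θ : Λ → Λ) (π : Λ → (ℕ → E) → β) (D : E → Λ → β → ℝ)
    (μ : Measure (Λ × (ℕ → E))) : ℝ :=
  - ∫ p, Real.log (D (p.2 0) p.1 (π (θ p.1) (shift p.2))) ∂μ

/-- `(μ_λ)_λ` is the Rokhlin disintegration of `μ` over the marginal `m`. -/
structure IsDisint (m : Measure Λ) (μ : Measure (Λ × (ℕ → E)))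
    (μd : Λ → Measure (ℕ → E)) : Prop where
  prob : ∀ l, IsProbabilityMeasure (μd l)
  meas : ∀ A : Set (ℕ → E), MeasurableSet A → Measurable fun l => μd l A
  eq : ∀ A : Set (Λ × (ℕ → E)), MeasurableSet A →
    μ A = ∫⁻ l, μd l {ω | (l, ω) ∈ A} ∂m

end Entropy

section KS

variable {α : Type*} [MeasurableSpace α]

/-- A countable measurable partition (indexed by `ℕ`, atoms may be empty). -/
structure IsPartition (P : ℕ → Set α) : Prop where
  meas : ∀ n, MeasurableSet (P n)
  disj : Pairwise (Function.onFun Disjoint P)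
  cover : (⋃ n, P n) = Set.univ

/-- Static entropy of a countable partition. -/
def partEnt (μ : Measure α) (P : ℕ → Set α) : ℝ≥0∞ :=
  ∑' n, ENNReal.ofReal (Real.negMulLog (μ (P n)).toReal)

/-- The atom `⋂_{i<n} T^{-i} P_{k i}` of the dynamical refinement `⋁_{i<n} T^{-i}P`. -/
def refinePart (T : α → α) (P : ℕ → Set α) (n : ℕ) (k : Fin n → ℕ) : Set α :=
  ⋂ i : Fin n, (T^[(i : ℕ)]) ⁻¹' P (k i)

/-- Dynamical entropy `h(μ, T, P) = lim (1/n) H(⋁_{i<n} T^{-i}P)`. -/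
def dynEnt (μ : Measure α) (T : α → α) (P : ℕ → Set α) : ℝ≥0∞ :=
  ⨅ n : ℕ, (∑' k : Fin (n + 1) → ℕ,
    ENNReal.ofReal (Real.negMulLog (μ (refinePart T P (n + 1) k)).toReal)) / (n + 1 : ℝ≥0∞)

/-- Kolmogorov–Sinai entropy `h(μ) = sup_P h(μ, T, P)` over countable measurable
partitions of finite static entropy. -/
def ksEnt (μ : Measure α) (T : α → α) : ℝ≥0∞ :=
  ⨆ (P : ℕ → Set α) (_ : IsPartition P) (_ : partEnt μ P ≠ ⊤), dynEnt μ T P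

end KS

end RIFS

/-- A random countable conformal iterated function system on a compact set
`X ⊆ W ⊆ ℝ^q`, with countable alphabet `E` and parameter space `(Λ, m, θ)`. -/
structure RandomCIFS (q : ℕ) (E : Type*) (Λ : Type*) [MeasurableSpace Λ] where
  m : Measure Λ
  m_prob : IsProbabilityMeasure m
  θ : Λ → Λ
  θ_meas : Measurable θ
  θ_bij : Function.Bijective θ
  θ_mp : MeasurePreserving θ m m
  θ_erg : Ergodic θ m
  X : Set (RIFS.Pt q)
  W : Set (RIFS.Pt q)
  X_cpt : IsCompact X
  X_conn : IsConnected X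
  X_reg : X = closure (interior X)
  W_open : IsOpen W
  W_bdd : Bornology.IsBounded W
  W_conn : IsConnected W
  X_sub_W : X ⊆ W
  s : ℝ
  s_mem : s ∈ Set.Ioo (0 : ℝ) 1
  φ : E → Λ → RIFS.Pt q → RIFS.Pt q
  φ_meas : ∀ e, Measurable fun p : Λ × RIFS.Pt q => φ e p.1 p.2
  φ_inj : ∀ e l, Set.InjOn (φ e l) W
  φ_mapsX : ∀ e l, Set.MapsTo (φ e l) X X
  φ_mapsW : ∀ e l, Set.MapsTo (φ e l) W W
  φ_lip : ∀ e l, LipschitzOnWith s.toNNReal (φ e l) X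
  /-- the conformal derivative modulus `|(φ_e^λ)'(x)|` -/
  D : E → Λ → RIFS.Pt q → ℝ
  φ_conf : ∀ e l x, x ∈ W → ∃ A : RIFS.Pt q →ₗᵢ[ℝ] RIFS.Pt q,
    HasFDerivAt (φ e l) (D e l x • A.toContinuousLinearMap) x
  /-- Bounded Distortion Property -/
  bdp : ∃ K : ℝ → ℝ, K 0 = 1 ∧ Tendsto K (nhdsWithin 0 (Set.Ioi 0)) (nhds 1) ∧
    (∀ t ∈ Set.Ico (0 : ℝ) 1, 1 ≤ K t) ∧
    ∀ t ∈ Set.Ico (0 : ℝ) 1, ∀ e l x y, x ∈ X →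
      ‖y - x‖ ≤ t * Metric.infDist x Wᶜ → D e l y ≤ K t * D e l x

namespace RandomCIFS

variable {q : ℕ} {E Λ : Type*} [MeasurableSpace Λ]

/-- A base point of `X`. -/
def x0 (S : RandomCIFS q E Λ) : RIFS.Pt q := S.X_conn.nonempty.some

/-- The coding maps `π_λ : E^∞ → ℝ^q`. -/
def projMap (S : RandomCIFS q E Λ) : Λ → (ℕ → E) → RIFS.Pt q :=
  RIFS.proj S.θ S.φ S.x0

/-- The limit set `J_λ = π_λ(E^∞)`. -/
def J (S : RandomCIFS q E Λ) (l : Λ) : Set (RIFS.Pt q) := Set.range (S.projMap l)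

/-- The skew product `θ × σ`. -/
def Tmap (S : RandomCIFS q E Λ) : Λ × (ℕ → E) → Λ × (ℕ → E) :=
  fun p => (S.θ p.1, RIFS.shift p.2)

/-- `|(φ_{ω|_n}^λ)'(π_{θ^n λ}(σ^n ω))|`, computed via the chain rule. -/
def Dword (S : RandomCIFS q E Λ) (l : Λ) (ω : ℕ → E) (n : ℕ) : ℝ :=
  ∏ j ∈ Finset.range n,
    S.D (ω j) (S.θ^[j] l) (S.projMap (S.θ^[j + 1] l) (RIFS.shift^[j + 1] ω))

end RandomCIFS

open RIFS

/-!
Cover `X` by balls `U_i` of radius `r/2` and put `A_i = π_λ⁻¹(U_i)`. For `ω ∈ A_i` the set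
`B_{π_λ}(ω, r)` contains `A_i`, so on `A_i` the integrand is at most `-log μ_λ(A_i)`, and the
integral over `A_i` is at most `-μ_λ(A_i) log μ_λ(A_i) ≤ 1`. Summing over the cover bounds the
integral by the number of balls, uniformly in `λ`; compactness of `X` provides a finite cover.
-/

section NegLogMeasure

variable {α : Type*} [MeasurableSpace α]

lemma ENNReal.ofReal_neg_log_toReal_mul_le_one (p : ℝ≥0∞) :
    ENNReal.ofReal (-Real.log p.toReal) * p ≤ 1 := by
  rcases eq_or_ne p ⊤ with rfl | hp
  · simp
  rw [← ENNReal.ofReal_toReal hp, ENNReal.toReal_ofReal ENNReal.toReal_nonneg,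
    ← ENNReal.ofReal_mul' ENNReal.toReal_nonneg, ← ENNReal.ofReal_one]
  refine ENNReal.ofReal_le_ofReal ?_
  have := Real.negMulLog_le_one_sub_self (x := p.toReal) ENNReal.toReal_nonneg
  rw [Real.negMulLog] at this
  nlinarith [ENNReal.toReal_nonneg (a := p)]

lemma setLIntegral_neg_log_measure_le_one (ν : Measure α) [IsFiniteMeasure ν] {A : Set α}
    {B : α → Set α} (hAB : ∀ ω ∈ A, A ⊆ B ω) :
    ∫⁻ ω in A, ENNReal.ofReal (-Real.log (ν (B ω)).toReal) ∂ν ≤ 1 := by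
  rcases eq_or_ne (ν A) 0 with hA | hA
  · simp [setLIntegral_measure_zero _ _ hA]
  have hApos : 0 < (ν A).toReal := ENNReal.toReal_pos hA (measure_ne_top ν A)
  calc ∫⁻ ω in A, ENNReal.ofReal (-Real.log (ν (B ω)).toReal) ∂ν
      ≤ ∫⁻ _ in A, ENNReal.ofReal (-Real.log (ν A).toReal) ∂ν := by
        refine setLIntegral_mono measurable_const fun ω hω => ?_
        have hle := ENNReal.toReal_mono (measure_ne_top ν _) (measure_mono (hAB ω hω))
        exact ENNReal.ofReal_le_ofReal (neg_le_neg (Real.log_le_log hApos hle))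
    _ = ENNReal.ofReal (-Real.log (ν A).toReal) * ν A := setLIntegral_const _ _
    _ ≤ 1 := ENNReal.ofReal_neg_log_toReal_mul_le_one _

lemma lintegral_neg_log_measure_le_card {ι : Type*} [Fintype ι] (ν : Measure α)
    [IsFiniteMeasure ν] {A : ι → Set α} (hA : ⋃ i, A i = univ) {B : α → Set α}
    (hAB : ∀ i, ∀ ω ∈ A i, A i ⊆ B ω) :
    ∫⁻ ω, ENNReal.ofReal (-Real.log (ν (B ω)).toReal) ∂ν ≤ Fintype.card ι := by
  calc ∫⁻ ω, ENNReal.ofReal (-Real.log (ν (B ω)).toReal) ∂ν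
      = ∫⁻ ω in ⋃ i, A i, ENNReal.ofReal (-Real.log (ν (B ω)).toReal) ∂ν := by
        rw [hA, Measure.restrict_univ]
    _ ≤ ∑' i, ∫⁻ ω in A i, ENNReal.ofReal (-Real.log (ν (B ω)).toReal) ∂ν :=
        lintegral_iUnion_le _ _
    _ ≤ ∑' _ : ι, 1 :=
        ENNReal.tsum_le_tsum fun i => setLIntegral_neg_log_measure_le_one ν (hAB i)
    _ = Fintype.card ι := by simp

lemma lintegral_neg_log_measure_BH_le {E β ι : Type*} [PseudoMetricSpace β] [Fintype ι]
    [MeasurableSpace E] (ν : Measure (ℕ → E)) [IsFiniteMeasure ν] {H : (ℕ → E) → β} {r : ℝ}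
    {z : ι → β} (hcov : range H ⊆ ⋃ i, ball (z i) (r / 2)) :
    ∫⁻ ω, ENNReal.ofReal (-Real.log (ν (BH H ω r)).toReal) ∂ν ≤ Fintype.card ι := by
  refine lintegral_neg_log_measure_le_card ν (A := fun i => H ⁻¹' ball (z i) (r / 2)) ?_ ?_
  · simpa [← preimage_iUnion, eq_univ_iff_forall] using fun ω => hcov (mem_range_self ω)
  · intro i ω hω ω' hω'
    calc dist (H ω') (H ω) ≤ dist (H ω') (z i) + dist (H ω) (z i) := dist_triangle_right _ _ _
      _ < r / 2 + r / 2 := add_lt_add hω' hω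
      _ = r := add_halves r

end NegLogMeasure

lemma one_le_tsum_succ_mul_exp_neg : 1 ≤ ∑' k : ℕ, ((k : ℝ) + 1) * Real.exp (-(k : ℝ)) := by
  have hsum : Summable fun k : ℕ => ((k : ℝ) + 1) * Real.exp (-(k : ℝ)) := by
    refine ((Real.summable_pow_mul_exp_neg_nat_mul 1 one_pos).add
      Real.summable_exp_neg_nat).congr fun k => ?_
    simp only [pow_one, neg_mul, one_mul]
    ring
  simpa using hsum.le_tsum 0 fun k _ => by positivity

namespace RandomCIFS

variable {q : ℕ} {E Λ : Type*} [MeasurableSpace Λ] (S : RandomCIFS q E Λ)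

lemma word_mem_X (n : ℕ) (l : Λ) (ω : ℕ → E) : word S.θ S.φ l ω n S.x0 ∈ S.X := by
  induction n generalizing l ω with
  | zero => exact S.X_conn.nonempty.some_mem
  | succ n ih => exact S.φ_mapsX _ _ (ih _ _)

lemma dist_word_succ_le (n : ℕ) (l : Λ) (ω : ℕ → E) :
    dist (word S.θ S.φ l ω n S.x0) (word S.θ S.φ l ω (n + 1) S.x0) ≤ diam S.X * S.s ^ n := by
  induction n generalizing l ω with
  | zero =>
    simpa using dist_le_diam_of_mem S.X_cpt.isBounded (S.word_mem_X 0 l ω) (S.word_mem_X 1 l ω)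
  | succ n ih =>
    have hs := S.s_mem.1.le
    calc dist (word S.θ S.φ l ω (n + 1) S.x0) (word S.θ S.φ l ω (n + 2) S.x0)
        ≤ S.s * dist (word S.θ S.φ (S.θ l) (shift ω) n S.x0)
            (word S.θ S.φ (S.θ l) (shift ω) (n + 1) S.x0) := by
          simpa [Real.coe_toNNReal _ hs, word] using (S.φ_lip (ω 0) l).dist_le_mul _
            (S.word_mem_X n _ _) _ (S.word_mem_X (n + 1) _ _)
      _ ≤ S.s * (diam S.X * S.s ^ n) := mul_le_mul_of_nonneg_left (ih _ _) hs
      _ = diam S.X * S.s ^ (n + 1) := by ring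

lemma tendsto_word_projMap (l : Λ) (ω : ℕ → E) :
    Tendsto (fun n => word S.θ S.φ l ω n S.x0) atTop (𝓝 (S.projMap l ω)) := by
  obtain ⟨x, hx⟩ := cauchySeq_tendsto_of_complete <|
    cauchySeq_of_le_geometric S.s (diam S.X) S.s_mem.2 fun n => S.dist_word_succ_le n l ω
  rwa [projMap, proj, hx.limUnder_eq]

lemma projMap_mem_X (l : Λ) (ω : ℕ → E) : S.projMap l ω ∈ S.X :=
  S.X_cpt.isClosed.mem_of_tendsto (S.tendsto_word_projMap l ω)
    (Eventually.of_forall fun n => S.word_mem_X n l ω)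

end RandomCIFS

theorem log_measure_ball_integrable_general
    {q : ℕ} {E Λ : Type*} [MeasurableSpace Λ]
    [MeasurableSpace E]
    (S : RandomCIFS q E Λ)
    (μ : Measure (Λ × (ℕ → E)))
    (μd : Λ → Measure (ℕ → E)) (hdis : IsDisint S.m μ μd) :
    (∀ r : ℝ, 0 < r →
      ∫⁻ l, ∫⁻ ω, ENNReal.ofReal
          (- Real.log ((μd l (BH (S.projMap l) ω r)).toReal)) ∂(μd l) ∂S.m < ⊤) ∧
    ∀ r : ℝ, 0 < r → ∀ (n : ℕ) (z : Fin n → RIFS.Pt q),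
      S.X ⊆ ⋃ i : Fin n, Metric.ball (z i) (r / 2) → ∀ l : Λ,
        ∫⁻ ω, ENNReal.ofReal
            (- Real.log ((μd l (BH (S.projMap l) ω r)).toReal)) ∂(μd l) ≤
          ENNReal.ofReal (n * ∑' k : ℕ, (k + 1 : ℝ) * Real.exp (-(k : ℝ))) := by
  have hbound : ∀ r {ι : Type _} [Fintype ι] (z : ι → Pt q),
      S.X ⊆ ⋃ i, ball (z i) (r / 2) → ∀ l, ∫⁻ ω, ENNReal.ofReal
        (-Real.log ((μd l (BH (S.projMap l) ω r)).toReal)) ∂(μd l) ≤ Fintype.card ι :=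
    fun r _ _ z hcov l => by
      have := hdis.prob l
      exact lintegral_neg_log_measure_BH_le _ ((range_subset_iff.2 (S.projMap_mem_X l)).trans hcov)
  refine ⟨fun r hr => ?_, fun r _ n z hcov l => ?_⟩
  · obtain ⟨t, -, hcov⟩ := S.X_cpt.elim_nhds_subcover (fun x => ball x (r / 2))
      fun x _ => ball_mem_nhds x (half_pos hr)
    have := S.m_prob
    refine (lintegral_mono fun l => hbound r (fun x : t => (x : Pt q)) ?_ l).trans_lt
      (lintegral_const_lt_top (ENNReal.natCast_ne_top _))
    simpa only [iUnion_subtype] using hcov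
  · calc _ ≤ ((Fintype.card (Fin n) : ℕ) : ℝ≥0∞) := hbound r z hcov l
      _ = ENNReal.ofReal (n * 1) := by simp
      _ ≤ _ := ENNReal.ofReal_le_ofReal <|
          mul_le_mul_of_nonneg_left one_le_tsum_succ_mul_exp_neg n.cast_nonneg

/-- **Lemma (integrability of `log μ_λ(B_{π_λ}(ω,r))`).**
For every `r > 0`, `∫_Λ ∫_{E^∞} log μ_λ(B_{π_λ}(ω,r)) dμ_λ dm > −∞`; more precisely,
if `X` is covered by `n` balls of radius `r/2`, then for every `λ`,
`∫ −log μ_λ(B_{π_λ}(ω,r)) dμ_λ ≤ n·Σ_{k≥0}(k+1)e^{−k} < ∞`. -/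
theorem log_measure_ball_integrable
    {q : ℕ} {E Λ : Type*} [MeasurableSpace Λ]
    [Countable E] [MeasurableSpace E] [MeasurableSingletonClass E]
    (S : RandomCIFS q E Λ)
    (μ : Measure (Λ × (ℕ → E))) [IsProbabilityMeasure μ]
    (hinv : MeasurePreserving S.Tmap μ μ)
    (hmarg : μ.map Prod.fst = S.m)
    (μd : Λ → Measure (ℕ → E)) (hdis : IsDisint S.m μ μd) :
    (∀ r : ℝ, 0 < r →
      ∫⁻ l, ∫⁻ ω, ENNReal.ofReal
          (- Real.log ((μd l (BH (S.projMap l) ω r)).toReal)) ∂(μd l) ∂S.m < ⊤) ∧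
    ∀ r : ℝ, 0 < r → ∀ (n : ℕ) (z : Fin n → RIFS.Pt q),
      S.X ⊆ ⋃ i : Fin n, Metric.ball (z i) (r / 2) → ∀ l : Λ,
        ∫⁻ ω, ENNReal.ofReal
            (- Real.log ((μd l (BH (S.projMap l) ω r)).toReal)) ∂(μd l) ≤
          ENNReal.ofReal (n * ∑' k : ℕ, (k + 1 : ℝ) * Real.exp (-(k : ℝ))) :=
  log_measure_ball_integrable_general S μ μd hdis
end
end

section
/- For every r > 0 and μ-almost every (λ,ω) ∈ Λ×E^∞, lim_{n→∞} (1/n) · log μ_{θ^n(λ)}(B_{π_{θ^n(λ)}}(σ^n(ω), r)) = 0. -/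
open MeasureTheory Filter Set Metric Function Topology
open scoped ENNReal NNReal

noncomputable section

open RIFS

namespace SubexpAux

variable {q : ℕ} {E Λ : Type*} [MeasurableSpace Λ]

lemma word_succ_right {β : Type*} (θ : Λ → Λ) (φ : E → Λ → β → β) :
    ∀ (n : ℕ) (l : Λ) (ω : ℕ → E) (x : β),
      word θ φ l ω (n + 1) x = word θ φ l ω n (φ (ω n) (θ^[n] l) x)
  | 0, l, ω, x => rfl
  | n + 1, l, ω, x => by
    show φ (ω 0) l (word θ φ (θ l) (shift ω) (n + 1) x) = _
    rw [word_succ_right θ φ n (θ l) (shift ω) x]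
    rfl

lemma Tmap_iterate (S : RandomCIFS q E Λ) :
    ∀ (n : ℕ) (p : Λ × (ℕ → E)), S.Tmap^[n] p = (S.θ^[n] p.1, RIFS.shift^[n] p.2)
  | 0, p => rfl
  | n + 1, p => by
    rw [Function.iterate_succ_apply', Tmap_iterate S n p, Function.iterate_succ_apply',
      Function.iterate_succ_apply']
    rfl

variable (S : RandomCIFS q E Λ)

lemma x0_mem : S.x0 ∈ S.X := S.X_conn.nonempty.some_mem

lemma word_mapsTo : ∀ (n : ℕ) (l : Λ) (ω : ℕ → E),
    Set.MapsTo (word S.θ S.φ l ω n) S.X S.X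
  | 0, _, _ => Set.mapsTo_id _
  | n + 1, l, ω => (S.φ_mapsX (ω 0) l).comp (word_mapsTo n (S.θ l) (shift ω))

lemma word_lip : ∀ (n : ℕ) (l : Λ) (ω : ℕ → E),
    LipschitzOnWith (S.s.toNNReal ^ n) (word S.θ S.φ l ω n) S.X
  | 0, _, _ => by
    rw [pow_zero]
    exact LipschitzWith.id.lipschitzOnWith
  | n + 1, l, ω => by
    rw [pow_succ']
    exact (S.φ_lip (ω 0) l).comp (word_lip n (S.θ l) (shift ω))
      (word_mapsTo S n (S.θ l) (shift ω))

lemma dist_word_le (l : Λ) (ω : ℕ → E) (n : ℕ) :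
    dist (word S.θ S.φ l ω n S.x0) (word S.θ S.φ l ω (n + 1) S.x0) ≤
      Metric.diam S.X * S.s ^ n := by
  rw [word_succ_right]
  set y := S.φ (ω n) (S.θ^[n] l) S.x0 with hy
  have hyX : y ∈ S.X := S.φ_mapsX _ _ (x0_mem S)
  have h := (word_lip S n l ω).dist_le_mul S.x0 (x0_mem S) y hyX
  have hcoe : ((S.s.toNNReal ^ n : ℝ≥0) : ℝ) = S.s ^ n := by
    rw [NNReal.coe_pow, Real.coe_toNNReal _ S.s_mem.1.le]
  have hdiam : dist S.x0 y ≤ Metric.diam S.X :=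
    Metric.dist_le_diam_of_mem S.X_cpt.isBounded (x0_mem S) hyX
  calc dist (word S.θ S.φ l ω n S.x0) (word S.θ S.φ l ω n y)
      ≤ ((S.s.toNNReal ^ n : ℝ≥0) : ℝ) * dist S.x0 y := h
    _ = S.s ^ n * dist S.x0 y := by rw [hcoe]
    _ ≤ S.s ^ n * Metric.diam S.X :=
        mul_le_mul_of_nonneg_left hdiam (pow_nonneg S.s_mem.1.le n)
    _ = Metric.diam S.X * S.s ^ n := mul_comm _ _

lemma proj_tendsto (l : Λ) (ω : ℕ → E) :
    Tendsto (fun n => word S.θ S.φ l ω n S.x0) atTop (𝓝 (S.projMap l ω)) := by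
  have hc : CauchySeq (fun n => word S.θ S.φ l ω n S.x0) :=
    cauchySeq_of_le_geometric S.s (Metric.diam S.X) S.s_mem.2 (fun n => dist_word_le S l ω n)
  obtain ⟨a, ha⟩ := cauchySeq_tendsto_of_complete hc
  have heq : S.projMap l ω = a := ha.limUnder_eq
  rw [heq]; exact ha

lemma proj_mem (l : Λ) (ω : ℕ → E) : S.projMap l ω ∈ S.X :=
  S.X_cpt.isClosed.mem_of_tendsto (proj_tendsto S l ω)
    (Filter.Eventually.of_forall fun n => word_mapsTo S n l ω (x0_mem S))

section Meas

variable [Countable E] [MeasurableSpace E] [MeasurableSingletonClass E]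

lemma measurable_shift : Measurable (shift : (ℕ → E) → (ℕ → E)) :=
  measurable_pi_lambda _ fun n => measurable_pi_apply (n + 1)

lemma word_meas (n : ℕ) :
    Measurable fun p : Λ × (ℕ → E) => word S.θ S.φ p.1 p.2 n S.x0 := by
  induction n generalizing S with
  | zero => exact measurable_const
  | succ n ih =>
    have hφ : Measurable fun z : (Λ × Pt q) × E => S.φ z.2 z.1.1 z.1.2 :=
      measurable_from_prod_countable_left fun e => S.φ_meas e
    have h1 : Measurable fun p : Λ × (ℕ → E) => (S.θ p.1, shift p.2) :=
      (S.θ_meas.comp measurable_fst).prodMk (measurable_shift.comp measurable_snd)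
    have hw : Measurable fun p : Λ × (ℕ → E) =>
        word S.θ S.φ (S.θ p.1) (shift p.2) n S.x0 := (ih S).comp h1
    exact hφ.comp ((measurable_fst.prodMk hw).prodMk
      ((measurable_pi_apply 0).comp measurable_snd))

lemma proj_meas : Measurable fun p : Λ × (ℕ → E) => S.projMap p.1 p.2 :=
  measurable_of_tendsto_metrizable (fun n => word_meas S n)
    (tendsto_pi_nhds.mpr fun p => proj_tendsto S p.1 p.2)

/-- The key quantity `μ_λ(B_{π_λ}(ω, r))` as a function of `(λ, ω)`. -/
def gfun (μd : Λ → Measure (ℕ → E)) (r : ℝ) : Λ × (ℕ → E) → ℝ≥0∞ :=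
  fun p => μd p.1 (BH (S.projMap p.1) p.2 r)

set_option maxHeartbeats 1000000 in
lemma gfun_meas (μd : Λ → Measure (ℕ → E))
    (hprob : ∀ l, IsProbabilityMeasure (μd l))
    (hmeas : ∀ A : Set (ℕ → E), MeasurableSet A → Measurable fun l => μd l A)
    (r : ℝ) : Measurable (gfun S μd r) := by
  set κ : ProbabilityTheory.Kernel (Λ × Pt q) (ℕ → E) :=
    ⟨fun y => μd y.1, Measure.measurable_of_measurable_coe _ fun s hs =>
      (hmeas s hs).comp measurable_fst⟩ with hκ
  haveI : ProbabilityTheory.IsMarkovKernel κ := ⟨fun a => hprob a.1⟩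
  have ht : MeasurableSet {z : (Λ × Pt q) × (ℕ → E) | dist (S.projMap z.1.1 z.2) z.1.2 < r} := by
    apply measurableSet_lt (Measurable.dist ?_ ?_) measurable_const
    · exact (proj_meas S).comp
        ((measurable_fst.comp measurable_fst).prodMk measurable_snd)
    · exact measurable_snd.comp measurable_fst
  have h := ProbabilityTheory.Kernel.measurable_kernel_prodMk_left (κ := κ) ht
  have h2 : Measurable fun p : Λ × (ℕ → E) => (p.1, S.projMap p.1 p.2) :=
    measurable_fst.prodMk (proj_meas S)
  exact h.comp h2

lemma measure_gfun_le (μ : Measure (Λ × (ℕ → E))) (μd : Λ → Measure (ℕ → E))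
    (hdis : IsDisint S.m μ μd) {r : ℝ} (hr : 0 < r) :
    ∃ N : ℕ, ∀ t : ℝ≥0∞, μ {p | gfun S μd r p ≤ t} ≤ N * t := by
  obtain ⟨F, hFX, hFfin, hFcov⟩ := S.X_cpt.finite_cover_balls (half_pos hr)
  refine ⟨hFfin.toFinset.card, fun t => ?_⟩
  have hA : MeasurableSet {p : Λ × (ℕ → E) | gfun S μd r p ≤ t} :=
    measurableSet_le (gfun_meas S μd hdis.prob hdis.meas r) measurable_const
  rw [hdis.eq _ hA]
  haveI := S.m_prob
  have hslice : ∀ l : Λ,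
      μd l {ω | (l, ω) ∈ {p | gfun S μd r p ≤ t}} ≤ (hFfin.toFinset.card : ℝ≥0∞) * t := by
    intro l
    have hsub : {ω | gfun S μd r (l, ω) ≤ t} ⊆
        ⋃ c ∈ hFfin.toFinset, (if μd l (S.projMap l ⁻¹' Metric.ball c (r / 2)) ≤ t
          then S.projMap l ⁻¹' Metric.ball c (r / 2) else ∅) := by
      intro ω hω
      have hmem := hFcov (proj_mem S l ω)
      simp only [Set.mem_iUnion, exists_prop] at hmem
      obtain ⟨c, hcF, hc⟩ := hmem
      have hball : Metric.ball c (r / 2) ⊆ Metric.ball (S.projMap l ω) r := by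
        intro x hx
        rw [Metric.mem_ball] at hx hc ⊢
        calc dist x (S.projMap l ω) ≤ dist x c + dist c (S.projMap l ω) := dist_triangle _ _ _
          _ < r / 2 + r / 2 := add_lt_add hx (by rwa [dist_comm] at hc)
          _ = r := add_halves r
      have hle : μd l (S.projMap l ⁻¹' Metric.ball c (r / 2)) ≤ t :=
        le_trans (measure_mono (Set.preimage_mono hball)) hω
      refine Set.mem_biUnion (hFfin.mem_toFinset.mpr hcF) ?_
      rw [if_pos hle]; exact hc
    calc μd l {ω | (l, ω) ∈ {p | gfun S μd r p ≤ t}}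
        ≤ ∑ c ∈ hFfin.toFinset, μd l (if μd l (S.projMap l ⁻¹' Metric.ball c (r / 2)) ≤ t
            then S.projMap l ⁻¹' Metric.ball c (r / 2) else ∅) :=
          (measure_mono hsub).trans (measure_biUnion_finset_le _ _)
      _ ≤ ∑ _c ∈ hFfin.toFinset, t := Finset.sum_le_sum fun c _ => by
          split_ifs with h
          · exact h
          · simp
      _ = (hFfin.toFinset.card : ℝ≥0∞) * t := by rw [Finset.sum_const, nsmul_eq_mul]
  calc ∫⁻ l, μd l {ω | (l, ω) ∈ {p | gfun S μd r p ≤ t}} ∂S.m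
      ≤ ∫⁻ _, (hFfin.toFinset.card : ℝ≥0∞) * t ∂S.m := lintegral_mono hslice
    _ = (hFfin.toFinset.card : ℝ≥0∞) * t := by rw [lintegral_const, measure_univ, mul_one]

end Meas

end SubexpAux

open SubexpAux

/-- **Lemma (subexponential decay along orbits).**
For every `r > 0` and `μ`-a.e. `(λ,ω)`,
`lim_{n→∞} (1/n) log μ_{θⁿλ}(B_{π_{θⁿλ}}(σⁿω, r)) = 0`. -/
theorem log_measure_ball_orbit_subexponential
    {q : ℕ} {E Λ : Type*} [MeasurableSpace Λ]
    [Countable E] [MeasurableSpace E] [MeasurableSingletonClass E]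
    (S : RandomCIFS q E Λ)
    (μ : Measure (Λ × (ℕ → E))) [IsProbabilityMeasure μ]
    (hinv : MeasurePreserving S.Tmap μ μ)
    (herg : Ergodic S.Tmap μ)
    (hmarg : μ.map Prod.fst = S.m)
    (μd : Λ → Measure (ℕ → E)) (hdis : IsDisint S.m μ μd) :
    ∀ r : ℝ, 0 < r → ∀ᵐ p ∂μ,
      Tendsto
        (fun n : ℕ => (1 / n : ℝ) *
          Real.log ((μd (S.θ^[n] p.1)
            (BH (S.projMap (S.θ^[n] p.1)) (RIFS.shift^[n] p.2) r)).toReal))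
        atTop (nhds 0) := by
  intro r hr
  obtain ⟨N, hN⟩ := measure_gfun_le S μ μd hdis hr
  have key : ∀ k : ℕ, ∀ᵐ p ∂μ, ∀ᶠ n : ℕ in atTop,
      ENNReal.ofReal (Real.exp (-((1 / ((k : ℝ) + 1)) * n))) <
        gfun S μd r (S.θ^[n] p.1, RIFS.shift^[n] p.2) := by
    intro k
    set ε : ℝ := 1 / ((k : ℝ) + 1) with hε
    have hε0 : 0 < ε := by positivity
    set ρ : ℝ≥0∞ := ENNReal.ofReal (Real.exp (-ε)) with hρ
    have hρ1 : ρ < 1 :=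
      ENNReal.ofReal_lt_one.mpr (Real.exp_lt_one_iff.mpr (neg_lt_zero.mpr hε0))
    set A : ℕ → Set (Λ × (ℕ → E)) := fun n =>
      S.Tmap^[n] ⁻¹' {p | gfun S μd r p ≤ ENNReal.ofReal (Real.exp (-(ε * n)))} with hA
    have hAmeas : ∀ n : ℕ,
        MeasurableSet {p | gfun S μd r p ≤ ENNReal.ofReal (Real.exp (-(ε * n)))} := fun n =>
      measurableSet_le (gfun_meas S μd hdis.prob hdis.meas r) measurable_const
    have hsum : ∑' n, μ (A n) ≠ ⊤ := by
      have hle : ∀ n, μ (A n) ≤ (N : ℝ≥0∞) * ρ ^ n := by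
        intro n
        have hpre : μ (A n) =
            μ {p | gfun S μd r p ≤ ENNReal.ofReal (Real.exp (-(ε * n)))} :=
          (hinv.iterate n).measure_preimage (hAmeas n).nullMeasurableSet
        rw [hpre]
        calc μ {p | gfun S μd r p ≤ ENNReal.ofReal (Real.exp (-(ε * n)))}
            ≤ (N : ℝ≥0∞) * ENNReal.ofReal (Real.exp (-(ε * n))) := hN _
          _ = (N : ℝ≥0∞) * ρ ^ n := by
              rw [hρ, ← ENNReal.ofReal_pow (Real.exp_nonneg _), ← Real.exp_nat_mul]
              congr 2
              ring
      refine ne_top_of_le_ne_top ?_ (ENNReal.tsum_le_tsum hle)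
      rw [ENNReal.tsum_mul_left, ENNReal.tsum_geometric]
      have h1ρ : (1 : ℝ≥0∞) - ρ ≠ 0 := by
        rw [Ne, tsub_eq_zero_iff_le]
        exact not_le.mpr hρ1
      exact ENNReal.mul_ne_top (ENNReal.natCast_ne_top N) (ENNReal.inv_ne_top.mpr h1ρ)
    filter_upwards [MeasureTheory.ae_eventually_notMem hsum] with p hp
    filter_upwards [hp] with n hn
    have hnotle : ¬ gfun S μd r (S.Tmap^[n] p) ≤ ENNReal.ofReal (Real.exp (-(ε * n))) := hn
    rw [Tmap_iterate S n p] at hnotle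
    have := not_le.mp hnotle
    rw [show -(ε * (n : ℝ)) = -(1 / ((k : ℝ) + 1) * n) by rw [hε]] at this
    exact this
  filter_upwards [ae_all_iff.mpr key] with p hp
  rw [Metric.tendsto_atTop]
  intro δ hδ
  obtain ⟨k, hk⟩ := exists_nat_one_div_lt hδ
  have hpk := hp k
  rw [eventually_atTop] at hpk
  obtain ⟨M, hM⟩ := hpk
  refine ⟨max M 1, fun n hn => ?_⟩
  have hn1 : 1 ≤ n := le_trans (le_max_right M 1) hn
  have hnM : M ≤ n := le_trans (le_max_left M 1) hn
  have hgt := hM n hnM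
  show dist ((1 / (n : ℝ)) *
      Real.log ((gfun S μd r (S.θ^[n] p.1, RIFS.shift^[n] p.2)).toReal)) 0 < δ
  set v : ℝ≥0∞ := gfun S μd r (S.θ^[n] p.1, RIFS.shift^[n] p.2) with hv
  haveI : IsProbabilityMeasure (μd (S.θ^[n] p.1)) := hdis.prob _
  have hv1 : v ≤ 1 := prob_le_one
  have hvt : v ≠ ⊤ := ne_top_of_le_ne_top ENNReal.one_ne_top hv1
  set ε : ℝ := 1 / ((k : ℝ) + 1) with hε
  have hε0 : 0 < ε := by positivity
  have hx : Real.exp (-(ε * n)) < v.toReal :=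
    (ENNReal.ofReal_lt_iff_lt_toReal (Real.exp_nonneg _) hvt).mp hgt
  have hx0 : 0 < v.toReal := lt_trans (Real.exp_pos _) hx
  have hx1 : v.toReal ≤ 1 := by
    simpa using ENNReal.toReal_mono ENNReal.one_ne_top hv1
  have hlog_le : Real.log v.toReal ≤ 0 := Real.log_nonpos hx0.le hx1
  have hlog_gt : -(ε * n) < Real.log v.toReal := by
    have h := Real.log_lt_log (Real.exp_pos _) hx
    rwa [Real.log_exp] at h
  rw [Real.dist_eq, sub_zero]
  have hncast : (0 : ℝ) < (n : ℝ) := by exact_mod_cast hn1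
  have habs : |(1 / (n : ℝ)) * Real.log v.toReal| =
      (1 / (n : ℝ)) * (-Real.log v.toReal) := by
    rw [abs_mul, abs_of_nonneg (by positivity : (0 : ℝ) ≤ 1 / (n : ℝ)),
      abs_of_nonpos hlog_le]
  rw [habs]
  calc (1 / (n : ℝ)) * (-Real.log v.toReal)
      ≤ (1 / (n : ℝ)) * (ε * n) := by
        apply mul_le_mul_of_nonneg_left _ (by positivity)
        linarith
    _ = ε := by field_simp
    _ < δ := hk
end
end
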